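/- arXiv:2101.05713 — 2 statements merged into one kernel-verified Lean document; each statement's English description precedes it below -/
import Mathlib

section
/- For all integers m ≥ 1, r ≥ 0, and k ≥ 0, one has B_k(r/m) = Σ_{j=0}^{k} (-1)^j · (j!/(j+1)) · W_{m,r}(k, j)/m^{k-j}, where B_k(x) is the k-th Bernoulli polynomial and W_{m,r}(k,j) are the r-Whitney numbers of the second kind. -/
/-- The `r`-Whitney numbers of the second kind
`W_{m,r}(k,j) = (1/(m^j j!)) Σ_{i=0}^{j} (-1)^{j-i} C(j,i) (mi + r)^k`. -/
def rWhitney (m r k j : ℕ) : ℚ :=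
  (1 / ((m : ℚ) ^ j * (Nat.factorial j : ℚ))) *
    ∑ i ∈ Finset.range (j + 1),
      (-1 : ℚ) ^ (j - i) * (Nat.choose j i : ℚ) * ((m : ℚ) * i + r) ^ k

/-!
Write `Δ` for the forward difference with step `1`. Since `(m i + r)^k = m^k (r/m + i)^k`, the
Whitney number is `W_{m,r}(k,j) = m^(k-j) Δ^j[x^k](r/m) / j!`, so the theorem is the identity
`B_k(x) = ∑_{j ≤ k} (-1)^j/(j+1) Δ^j[x^k](x)` at `x = r/m`.

The recurrence `∑_{i ≤ n} C(n+1,i) B_i(x) = (n+1) x^n` determines the Bernoulli polynomials.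
Since `∑_{i ≤ n} C(n+1,i) x^i = Δ[x^(n+1)]`, the right-hand sides satisfy it once we know
`∑_j (-1)^j/(j+1) Δ^(j+1) P = P'` for polynomials `P` (that is, `log (1 + Δ) = d/dx`). This
follows by differentiating at `t = 0` the Gregory–Newton expansion
`P(x + t) = ∑_j C(t,j) Δ^j P(x)`, read as a polynomial identity in `t`: the derivative of
`C(t,j)` at `0` is `(-1)^(j-1)/j`.
-/
open Polynomial Finset Nat fwdDiff

section CommRing

variable {R : Type*} [CommRing R]

theorem descPochhammer_succ_coeff_one (j : ℕ) :
    (descPochhammer R (j + 1)).coeff 1 = (-1) ^ j * j ! := by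
  have h := ascPochhammer_eval_neg_eq_descPochhammer R (j : R) j
  rw [descPochhammer_eval_eq_descFactorial, Nat.descFactorial_self] at h
  rw [descPochhammer_succ_left, coeff_X_mul, coeff_zero_eq_eval_zero, eval_comp,
    descPochhammer_eval_eq_ascPochhammer, eval_sub, eval_X, eval_one]
  convert h using 2
  ring

theorem eval_add_natCast_eq_sum_fwdDiff_iter (P : R[X]) {N : ℕ} (hN : P.natDegree < N)
    (x : R) (n : ℕ) :
    P.eval (x + n) = ∑ j ∈ range N, (n.choose j : R) * Δ_[1] ^[j] P.eval x := by
  have hvanish : ∀ j ∈ range (max N (n + 1)), j ∉ range N →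
      (n.choose j : R) * Δ_[1] ^[j] P.eval x = 0 := fun j _ hj => by
    rw [fwdDiff_iter_eq_zero_of_degree_lt (hN.trans_le (by simpa using hj)), Pi.zero_apply,
      mul_zero]
  have hchoose : ∀ j ∈ range (max N (n + 1)), j ∉ range (n + 1) →
      (n.choose j : R) * Δ_[1] ^[j] P.eval x = 0 := fun j _ hj => by
    rw [choose_eq_zero_of_lt (by simpa [Nat.lt_succ_iff] using hj), cast_zero, zero_mul]
  calc P.eval (x + n) = P.eval (x + n • 1) := by rw [nsmul_one]
    _ = ∑ j ∈ range (n + 1), (n.choose j : R) * Δ_[1] ^[j] P.eval x := by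
      rw [shift_eq_sum_fwdDiff_iter 1 P.eval]; simp only [nsmul_eq_mul]
    _ = ∑ j ∈ range N, (n.choose j : R) * Δ_[1] ^[j] P.eval x := by
      rw [sum_subset (range_subset_range.2 (le_max_right _ _)) hchoose,
        sum_subset (range_subset_range.2 (le_max_left _ _)) hvanish]

theorem sum_range_mul_fwdDiff_iter_pow_of_lt (c : ℕ → R) {i N : ℕ} (h : i < N) (x : R) :
    ∑ j ∈ range N, c j * Δ_[1] ^[j] (fun r : R ↦ r ^ i) x =
      ∑ j ∈ range (i + 1), c j * Δ_[1] ^[j] (fun r : R ↦ r ^ i) x :=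
  (sum_subset (range_subset_range.2 h) fun j _ hj => by
    rw [fwdDiff_iter_pow_eq_zero_of_lt (by simpa using hj), Pi.zero_apply, mul_zero]).symm

theorem fwdDiff_pow_eq_sum_choose_smul (n : ℕ) :
    Δ_[1] (fun r : R ↦ r ^ n) = ∑ i ∈ range n, (n.choose i : R) • fun r : R ↦ r ^ i := by
  ext x
  simp [fwdDiff, add_pow, sum_range_succ, mul_comm]

end CommRing

section CharZeroField

variable {K : Type*} [Field K] [CharZero K]

theorem taylor_eq_sum_fwdDiff_iter_smul_descPochhammer (P : K[X]) {N : ℕ}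
    (hN : P.natDegree < N) (x : K) :
    taylor x P = ∑ j ∈ range N, (Δ_[1] ^[j] P.eval x / j !) • descPochhammer K j := by
  refine eq_of_infinite_eval_eq _ _ (Set.Infinite.mono ?_ (Set.infinite_range_of_injective
    (Nat.cast_injective (R := K))))
  rintro _ ⟨n, rfl⟩
  simp only [Set.mem_ofPred_eq, taylor_eval, eval_finsetSum, eval_smul, smul_eq_mul,
    add_comm _ x, eval_add_natCast_eq_sum_fwdDiff_iter P hN, cast_choose_eq_descPochhammer_div]
  exact sum_congr rfl fun j _ => by ring

theorem derivative_eval_eq_sum_fwdDiff_iter (P : K[X]) {N : ℕ} (hN : P.natDegree ≤ N) (x : K) :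
    P.derivative.eval x = ∑ j ∈ range N, (-1) ^ j / (j + 1) * Δ_[1] ^[j + 1] P.eval x := by
  rw [← taylor_coeff_one,
    taylor_eq_sum_fwdDiff_iter_smul_descPochhammer P (Nat.lt_succ_of_le hN), finsetSum_coeff,
    sum_range_succ']
  simp only [coeff_smul, descPochhammer_succ_coeff_one, descPochhammer_zero, coeff_one,
    one_ne_zero, if_false, smul_eq_mul, mul_zero, add_zero]
  refine sum_congr rfl fun j _ => ?_
  have hfac : (j ! : K) ≠ 0 := cast_ne_zero.2 j.factorial_ne_zero
  rw [factorial_succ]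
  push_cast
  field_simp

theorem sum_choose_mul_sum_fwdDiff_iter_pow (n : ℕ) (x : K) :
    ∑ i ∈ range (n + 1), ((n + 1).choose i : K) *
        ∑ j ∈ range (i + 1), (-1) ^ j / (j + 1) * Δ_[1] ^[j] (fun r : K ↦ r ^ i) x =
      (n + 1) * x ^ n := by
  calc _ = ∑ i ∈ range (n + 1), ((n + 1).choose i : K) *
        ∑ j ∈ range (n + 1), (-1) ^ j / (j + 1) * Δ_[1] ^[j] (fun r : K ↦ r ^ i) x :=
        sum_congr rfl fun i hi => by
          rw [sum_range_mul_fwdDiff_iter_pow_of_lt _ (mem_range.1 hi)]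
    _ = ∑ j ∈ range (n + 1), (-1) ^ j / (j + 1) *
        ∑ i ∈ range (n + 1), ((n + 1).choose i : K) * Δ_[1] ^[j] (fun r : K ↦ r ^ i) x := by
      simp only [mul_sum]
      rw [sum_comm]
      exact sum_congr rfl fun j _ => sum_congr rfl fun i _ => by ring
    _ = ∑ j ∈ range (n + 1), (-1) ^ j / (j + 1) *
        Δ_[1] ^[j + 1] (X ^ (n + 1) : K[X]).eval x := by
      simp only [Function.iterate_succ_apply, eval_pow, eval_X, fwdDiff_pow_eq_sum_choose_smul,
        fwdDiff_iter_finsetSum, fwdDiff_iter_const_smul, Finset.sum_apply, Pi.smul_apply,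
        smul_eq_mul]
    _ = (n + 1) * x ^ n := by
      rw [← derivative_eval_eq_sum_fwdDiff_iter _ (natDegree_X_pow_le _), derivative_X_pow]
      simp

theorem eq_of_sum_range_choose_mul_eq {f g : ℕ → K}
    (h : ∀ n, ∑ i ∈ range (n + 1), ((n + 1).choose i : K) * f i =
      ∑ i ∈ range (n + 1), ((n + 1).choose i : K) * g i) (k : ℕ) : f k = g k := by
  induction k using Nat.strong_induction_on with
  | _ k ih =>
    have hk := h k
    rw [sum_range_succ, sum_range_succ,
      sum_congr rfl fun i hi => by rw [ih i (mem_range.1 hi)], add_right_inj] at hk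
    refine mul_left_cancel₀ ?_ hk
    rw [choose_succ_self_right]
    exact_mod_cast k.succ_ne_zero

end CharZeroField

theorem bernoulli_eval_eq_sum_fwdDiff_iter (k : ℕ) (x : ℚ) :
    (Polynomial.bernoulli k).eval x =
      ∑ j ∈ range (k + 1), (-1) ^ j / (j + 1) * Δ_[1] ^[j] (fun r : ℚ ↦ r ^ k) x := by
  refine eq_of_sum_range_choose_mul_eq (f := fun i ↦ (Polynomial.bernoulli i).eval x)
    (g := fun i ↦ ∑ j ∈ range (i + 1), (-1) ^ j / (j + 1) * Δ_[1] ^[j] (· ^ i) x)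
    (fun n ↦ ?_) k
  rw [sum_choose_mul_sum_fwdDiff_iter_pow]
  simpa only [eval_finsetSum, eval_smul, eval_monomial, smul_eq_mul]
    using congr_arg (eval x) (Polynomial.sum_bernoulli n)

theorem rWhitney_eq_fwdDiff_iter {m : ℕ} (hm : (m : ℚ) ≠ 0) (r k j : ℕ) :
    rWhitney m r k j = m ^ k / (m ^ j * j !) * Δ_[1] ^[j] (fun x : ℚ ↦ x ^ k) (r / m) := by
  rw [rWhitney, fwdDiff_iter_eq_sum_shift, mul_sum, mul_sum]
  refine sum_congr rfl fun i _ => ?_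
  rw [zsmul_eq_mul, nsmul_one, show (m : ℚ) * i + r = m * (r / m + i) by field_simp; ring,
    mul_pow]
  push_cast
  ring

/-- `B_k(r/m) = Σ_{j=0}^{k} (-1)^j (j!/(j+1)) W_{m,r}(k,j)/m^{k-j}`. -/
theorem bernoulli_poly_eval_div_eq_whitney (m r k : ℕ) (hm : 1 ≤ m) :
    (Polynomial.bernoulli k).eval ((r : ℚ) / m) =
      ∑ j ∈ Finset.range (k + 1),
        (-1 : ℚ) ^ j * ((Nat.factorial j : ℚ) / (j + 1)) *
          rWhitney m r k j / (m : ℚ) ^ (k - j) := by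
  have hm0 : (m : ℚ) ≠ 0 := cast_ne_zero.2 (by omega)
  rw [bernoulli_eval_eq_sum_fwdDiff_iter]
  refine sum_congr rfl fun j hj => ?_
  have hfac : (j ! : ℚ) ≠ 0 := cast_ne_zero.2 j.factorial_ne_zero
  rw [rWhitney_eq_fwdDiff_iter hm0,
    ← pow_sub_mul_pow (m : ℚ) (Nat.lt_succ_iff.1 (mem_range.1 hj))]
  field_simp
end

section
/- For all integers m ≥ 1, r ≥ 0, k ≥ 0, and n ≥ 1, the power sum S_k^{m,r}(n) = Σ_{ℓ=0}^{n-1} (ℓm + r)^k satisfies S_k^{m,r}(n) = Σ_{j=0}^{k} m^j · j! · W_{m,r}(k, j) · C(n, j+1), where W_{m,r}(k,j) are the r-Whitney numbers of the second kind and C(n, j+1) is the ordinary binomial coefficient. -/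
/-! Writing `f ℓ = (ℓ m + r)ᵏ`, the number `mʲ j! W_{m,r}(k,j)` is the `j`-th forward difference
`Δʲ f 0`. Applying the Gregory–Newton formula to the partial sums `F n = ∑_{ℓ<n} f ℓ`, whose
forward difference is `f`, gives `F n = ∑_j C(n, j+1) Δʲ f 0`. Since `f` is a polynomial of degree
`k` in `ℓ`, the terms with `j > k` vanish, as do those with `j ≥ n`. -/

open Finset Function Polynomial
open scoped fwdDiff Nat

theorem sum_range_eq_sum_choose_succ_smul_fwdDiff_iter {G : Type*} [AddCommGroup G]
    (f : ℕ → G) (n : ℕ) :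
    ∑ ℓ ∈ range n, f ℓ = ∑ j ∈ range n, n.choose (j + 1) • (Δ_[1])^[j] f 0 := by
  set F : ℕ → G := fun n ↦ ∑ ℓ ∈ range n, f ℓ
  have hF : Δ_[1] F = f := funext fun ℓ ↦ by simp [F, fwdDiff, sum_range_succ]
  have newton := shift_eq_sum_fwdDiff_iter 1 F n 0
  rw [sum_range_succ'] at newton
  simpa [F, ← iterate_succ_apply, hF] using newton

theorem Polynomial.fwdDiff_iter_eval_natCast_eq_zero_of_natDegree_lt {R : Type*} [CommRing R]
    {P : R[X]} {j : ℕ} (hP : P.natDegree < j) :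
    (Δ_[1])^[j] (fun n : ℕ ↦ P.eval (n : R)) = 0 := by
  ext n
  have := congr_fun (P.fwdDiff_iter_eq_zero_of_degree_lt hP) (n : R)
  rw [fwdDiff_iter_eq_sum_shift] at this ⊢
  simpa using this

theorem fwdDiff_iter_affine_pow_eq_zero {R : Type*} [CommRing R] (a b : R) {k j : ℕ}
    (h : k < j) : (Δ_[1])^[j] (fun ℓ : ℕ ↦ ((ℓ : R) * a + b) ^ k) = 0 := by
  have hdeg : ((C a * X + C b) ^ k).natDegree < j :=
    (natDegree_pow_le_of_le k natDegree_linear_le).trans_lt (by omega)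
  have heval : (fun ℓ : ℕ ↦ ((C a * X + C b) ^ k).eval (ℓ : R)) =
      fun ℓ : ℕ ↦ ((ℓ : R) * a + b) ^ k := by
    ext ℓ
    simp only [eval_pow, eval_add, eval_mul, eval_C, eval_X, mul_comm a]
  rw [← heval]
  exact fwdDiff_iter_eval_natCast_eq_zero_of_natDegree_lt hdeg

theorem pow_mul_factorial_mul_rWhitney {m : ℕ} (hm : 0 < m) (r k j : ℕ) :
    (m : ℚ) ^ j * j ! * rWhitney m r k j =
      (Δ_[1])^[j] (fun ℓ : ℕ ↦ ((ℓ : ℚ) * m + r) ^ k) 0 := by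
  have hne : (m : ℚ) ^ j * j ! ≠ 0 := by positivity
  rw [rWhitney, ← mul_assoc, mul_one_div_cancel hne, one_mul, fwdDiff_iter_eq_sum_shift]
  refine sum_congr rfl fun i _ ↦ ?_
  simp only [zsmul_eq_mul, zero_add, smul_eq_mul, mul_one]
  push_cast
  ring

theorem power_sum_eq_whitney_binomial_general (m r k n : ℕ) (hm : 1 ≤ m) :
    ∑ ℓ ∈ Finset.range n, ((ℓ : ℚ) * m + r) ^ k =
      ∑ j ∈ Finset.range (k + 1),
        (m : ℚ) ^ j * (Nat.factorial j : ℚ) * rWhitney m r k j *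
          (Nat.choose n (j + 1) : ℚ) := by
  set f : ℕ → ℚ := fun ℓ ↦ ((ℓ : ℚ) * m + r) ^ k
  have hvanish : ∀ j ≥ min n (k + 1), n.choose (j + 1) • (Δ_[1])^[j] f 0 = 0 := fun j hj ↦ by
    rcases min_le_iff.mp hj with hjn | hjk
    · rw [Nat.choose_eq_zero_of_lt (by omega), zero_smul]
    · rw [fwdDiff_iter_affine_pow_eq_zero _ _ (by omega), Pi.zero_apply, smul_zero]
  calc ∑ ℓ ∈ range n, f ℓ
      = ∑ j ∈ range n, n.choose (j + 1) • (Δ_[1])^[j] f 0 :=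
        sum_range_eq_sum_choose_succ_smul_fwdDiff_iter f n
    _ = ∑ j ∈ range (min n (k + 1)), n.choose (j + 1) • (Δ_[1])^[j] f 0 :=
        eventually_constant_sum hvanish (min_le_left _ _)
    _ = ∑ j ∈ range (k + 1), n.choose (j + 1) • (Δ_[1])^[j] f 0 :=
        (eventually_constant_sum hvanish (min_le_right _ _)).symm
    _ = _ := sum_congr rfl fun j _ ↦ by
        rw [pow_mul_factorial_mul_rWhitney hm, nsmul_eq_mul, mul_comm]

/-- `S_k^{m,r}(n) = Σ_{j=0}^{k} m^j j! W_{m,r}(k,j) C(n, j+1)`. -/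
theorem power_sum_eq_whitney_binomial (m r k n : ℕ) (hm : 1 ≤ m) (hn : 1 ≤ n) :
    ∑ ℓ ∈ Finset.range n, ((ℓ : ℚ) * m + r) ^ k =
      ∑ j ∈ Finset.range (k + 1),
        (m : ℚ) ^ j * (Nat.factorial j : ℚ) * rWhitney m r k j *
          (Nat.choose n (j + 1) : ℚ) :=
  power_sum_eq_whitney_binomial_general m r k n hm
end
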